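/- Let W be a nonnegative random variable with 0 < E W < ∞, let W^(1) have the size-biased distribution of W, and let U be uniform on (0,1) and independent of W^(1). Then for every absolutely continuous function f : ℝ → ℝ with bounded derivative, E W · E f′(U·W^(1)) = E f(W) − f(0). -/

import Mathlib

/-! Since `f w - f 0 = w ∫₀¹ f'(u w) du`, taking expectations gives
`E f(W) - f 0 = E[W g(W)]` with `g w = ∫₀¹ f'(u w) du`. Size biasing turns `E[W g(W)]` into
`E W · E g(W⁽¹⁾)`, and by independence and uniformity of `U`, `E g(W⁽¹⁾) = E f'(U W⁽¹⁾)`. -/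

open MeasureTheory ProbabilityTheory

/-- The `α`-power bias distribution of a distribution `μ` on `ℝ`. -/
noncomputable def powerBias (α : ℝ) (μ : Measure ℝ) : Measure ℝ :=
  (ENNReal.ofReal (∫ x, |x| ^ α ∂μ))⁻¹ •
    μ.withDensity (fun x => ENNReal.ofReal (|x| ^ α))

/-- The uniform probability measure on the open interval `(a, b)`. -/
noncomputable def uniformIoo (a b : ℝ) : Measure ℝ :=
  (ENNReal.ofReal (b - a))⁻¹ • volume.restrict (Set.Ioo a b)

/-- `f` is absolutely continuous with (a.e.) derivative `f'`, and `f'` is bounded. -/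
def IsAbsContWithBddDeriv (f f' : ℝ → ℝ) : Prop :=
  Measurable f' ∧ (∃ C, ∀ x, |f' x| ≤ C) ∧ ∀ x, f x = f 0 + ∫ t in (0:ℝ)..x, f' t

theorem integral_powerBias (α : ℝ) (μ : Measure ℝ) (g : ℝ → ℝ) :
    ∫ x, g x ∂(powerBias α μ) =
      (∫ x, |x| ^ α ∂μ)⁻¹ * ∫ x, |x| ^ α * g x ∂μ := by
  rw [powerBias, integral_smul_measure, ENNReal.toReal_inv,
    ENNReal.toReal_ofReal (integral_nonneg fun x => by positivity), smul_eq_mul,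
    integral_withDensity_eq_integral_toReal_smul (by fun_prop)
      (.of_forall fun _ => ENNReal.ofReal_lt_top)]
  simp only [ENNReal.toReal_ofReal (Real.rpow_nonneg (abs_nonneg _) _), smul_eq_mul]

theorem integral_powerBias_one_of_nonneg {μ : Measure ℝ} (hμ : ∀ᵐ x ∂μ, 0 ≤ x) (g : ℝ → ℝ) :
    ∫ x, g x ∂(powerBias 1 μ) = (∫ x, x ∂μ)⁻¹ * ∫ x, x * g x ∂μ := by
  have habs : ∀ᵐ x ∂μ, |x| ^ (1 : ℝ) = x := hμ.mono fun x hx => by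
    rw [Real.rpow_one, abs_of_nonneg hx]
  rw [integral_powerBias, integral_congr_ae habs,
    integral_congr_ae (habs.mono fun x hx => congrArg (· * g x) hx)]

theorem integral_uniformIoo {a b : ℝ} (hab : a ≤ b) (g : ℝ → ℝ) :
    ∫ x, g x ∂(uniformIoo a b) = (b - a)⁻¹ * ∫ x in a..b, g x := by
  rw [uniformIoo, integral_smul_measure, ENNReal.toReal_inv,
    ENNReal.toReal_ofReal (sub_nonneg.2 hab), smul_eq_mul,
    intervalIntegral.integral_of_le hab, integral_Ioc_eq_integral_Ioo]

theorem ProbabilityTheory.IndepFun.integral_comp_eq_integral_integral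
    {Ω α β E : Type*} [MeasurableSpace Ω] [MeasurableSpace α] [MeasurableSpace β]
    [NormedAddCommGroup E] [NormedSpace ℝ E] {μ : Measure Ω} [IsFiniteMeasure μ]
    {X : Ω → α} {Y : Ω → β} (hXY : IndepFun X Y μ) (hX : AEMeasurable X μ)
    (hY : AEMeasurable Y μ) {g : α × β → E} (hg : Integrable g ((μ.map X).prod (μ.map Y))) :
    ∫ ω, g (X ω, Y ω) ∂μ = ∫ y, ∫ x, g (x, y) ∂(μ.map X) ∂(μ.map Y) := by
  have hprod := hXY.map_prod_eq_prod_map_map hX hY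
  rw [← integral_prod_symm g hg, ← hprod, integral_map (hX.prodMk hY) (hprod ▸ hg.1)]

theorem mul_intervalIntegral_comp_mul_eq_sub {f f' : ℝ → ℝ}
    (hf : ∀ x, f x = f 0 + ∫ t in (0:ℝ)..x, f' t) (w : ℝ) :
    w * ∫ u in (0:ℝ)..1, f' (u * w) = f w - f 0 := by
  rcases eq_or_ne w 0 with rfl | hw
  · simp
  rw [intervalIntegral.integral_comp_mul_right f' hw, zero_mul, one_mul, smul_eq_mul,
    mul_inv_cancel_left₀ hw, hf w, add_sub_cancel_left]

namespace IsAbsContWithBddDeriv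

variable {f f' : ℝ → ℝ}

theorem intervalIntegrable (hf : IsAbsContWithBddDeriv f f') (a b : ℝ) :
    IntervalIntegrable f' volume a b := by
  obtain ⟨hf'meas, ⟨C, hC⟩, -⟩ := hf
  exact IntervalIntegrable.mono_fun' (g := fun _ => C) intervalIntegrable_const
    hf'meas.aestronglyMeasurable (.of_forall hC)

theorem continuous (hf : IsAbsContWithBddDeriv f f') : Continuous f := by
  rw [funext hf.2.2]
  exact continuous_const.add (intervalIntegral.continuous_primitive hf.intervalIntegrable 0)

theorem integrable {μ : Measure ℝ} [IsFiniteMeasure μ] (hf : IsAbsContWithBddDeriv f f')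
    (hμ : Integrable id μ) : Integrable f μ := by
  obtain ⟨C, hC⟩ := hf.2.1
  have hbound (x : ℝ) : |f x - f 0| ≤ C * |x| := by
    rw [hf.2.2 x, add_sub_cancel_left, ← Real.norm_eq_abs]
    simpa using intervalIntegral.norm_integral_le_of_norm_le_const (a := 0) (b := x) fun t _ =>
      (Real.norm_eq_abs (f' t)).trans_le (hC t)
  refine Integrable.mono' ((integrable_const |f 0|).add (hμ.abs.const_mul C))
    hf.continuous.aestronglyMeasurable (.of_forall fun x => ?_)
  calc ‖f x‖ = |f 0 + (f x - f 0)| := by rw [add_sub_cancel, Real.norm_eq_abs]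
    _ ≤ |f 0| + C * |x| := (abs_add_le _ _).trans (by gcongr; exact hbound x)

theorem integrable_deriv_comp_mul {ν : Measure (ℝ × ℝ)} [IsFiniteMeasure ν]
    (hf : IsAbsContWithBddDeriv f f') : Integrable (fun p => f' (p.1 * p.2)) ν :=
  have ⟨C, hC⟩ := hf.2.1
  .of_bound (hf.1.comp (measurable_fst.mul measurable_snd)).aestronglyMeasurable C
    (.of_forall fun _ => hC _)

theorem integral_mul_intervalIntegral_comp_mul {μ : Measure ℝ} [IsProbabilityMeasure μ]
    (hf : IsAbsContWithBddDeriv f f') (hμ : Integrable id μ) :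
    ∫ x, x * (∫ u in (0:ℝ)..1, f' (u * x)) ∂μ = ∫ x, f x ∂μ - f 0 := by
  rw [integral_congr_ae (.of_forall (mul_intervalIntegral_comp_mul_eq_sub hf.2.2)),
    integral_sub (hf.integrable hμ) (integrable_const _), integral_const, probReal_univ,
    one_smul]

end IsAbsContWithBddDeriv

/-- If `W ≥ 0` has `0 < E W < ∞`, `W⁽¹⁾` has the size-biased distribution of `W`, and `U` is
uniform on `(0,1)` independent of `W⁽¹⁾`, then for every absolutely continuous `f` with
bounded derivative, `E W · E f'(U·W⁽¹⁾) = E f(W) - f(0)`. -/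
theorem size_bias_stein_identity
    {Ω Ω' : Type*} [MeasureSpace Ω] [IsProbabilityMeasure (ℙ : Measure Ω)]
    [MeasureSpace Ω'] [IsProbabilityMeasure (ℙ : Measure Ω')]
    (W : Ω → ℝ) (U W1 : Ω' → ℝ)
    (hW : Measurable W) (hU : Measurable U) (hW1 : Measurable W1)
    (hWnonneg : ∀ᵐ ω ∂ℙ, 0 ≤ W ω)
    (hint : Integrable W ℙ) (hpos : 0 < ∫ ω, W ω ∂ℙ)
    (hbias : Measure.map W1 ℙ = powerBias 1 (Measure.map W ℙ))
    (hUlaw : Measure.map U ℙ = uniformIoo 0 1)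
    (hindep : IndepFun U W1 ℙ)
    (f f' : ℝ → ℝ) (hf : IsAbsContWithBddDeriv f f') :
    (∫ ω, W ω ∂ℙ) * ∫ ω, f' (U ω * W1 ω) ∂ℙ = (∫ ω, f (W ω) ∂ℙ) - f 0 := by
  set μ := Measure.map W ℙ
  have : IsProbabilityMeasure μ := Measure.isProbabilityMeasure_map hW.aemeasurable
  have : IsProbabilityMeasure (Measure.map U ℙ) :=
    Measure.isProbabilityMeasure_map hU.aemeasurable
  have : IsProbabilityMeasure (Measure.map W1 ℙ) :=
    Measure.isProbabilityMeasure_map hW1.aemeasurable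
  have hμ_int : Integrable id μ :=
    (integrable_map_measure aestronglyMeasurable_id hW.aemeasurable).2 hint
  have hμ_nonneg : ∀ᵐ x ∂μ, 0 ≤ x := (ae_map_iff hW.aemeasurable measurableSet_Ici).2 hWnonneg
  have hμ_mean : ∫ x, x ∂μ = ∫ ω, W ω ∂ℙ := integral_map hW.aemeasurable aestronglyMeasurable_id
  calc (∫ ω, W ω ∂ℙ) * ∫ ω, f' (U ω * W1 ω) ∂ℙ
      = (∫ ω, W ω ∂ℙ) * ∫ w, (∫ u in (0:ℝ)..1, f' (u * w)) ∂(powerBias 1 μ) := by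
        rw [hindep.integral_comp_eq_integral_integral hU.aemeasurable hW1.aemeasurable
          hf.integrable_deriv_comp_mul, hUlaw, hbias]
        simp only [integral_uniformIoo zero_le_one, sub_zero, inv_one, one_mul]
    _ = ∫ x, x * (∫ u in (0:ℝ)..1, f' (u * x)) ∂μ := by
        rw [integral_powerBias_one_of_nonneg hμ_nonneg, hμ_mean, mul_inv_cancel_left₀ hpos.ne']
    _ = (∫ ω, f (W ω) ∂ℙ) - f 0 := by
        rw [hf.integral_mul_intervalIntegral_comp_mul hμ_int,
          integral_map hW.aemeasurable hf.continuous.aestronglyMeasurable]
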